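/- arXiv:cs/0403040 — 2 statements merged into one kernel-verified Lean document; each statement's English description precedes it below -/
import Mathlib

section
/- In a directed acyclic graph G, if an arc (i,j) is a bridge of the underlying undirected graph (i.e., its removal disconnects the component containing i and j), then reversing the arc (i,j) to (j,i) yields a graph that is still acyclic. -/
def DAcyclic {V : Type*} (A : Finset (V × V)) : Prop :=
  ∀ a : V, ¬ Relation.TransGen (fun x y => (x, y) ∈ A) a a

def toGraph {V : Type*} [DecidableEq V] (A : Finset (V × V)) : SimpleGraph V where
  Adj a b := a ≠ b ∧ ((a, b) ∈ A ∨ (b, a) ∈ A)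
  symm := ⟨fun _ _ h => ⟨h.1.symm, h.2.symm⟩⟩
  loopless := ⟨fun _ h => h.1 rfl⟩

instance {V : Type*} [DecidableEq V] (A : Finset (V × V)) :
    DecidableRel (toGraph A).Adj :=
  fun a b => inferInstanceAs (Decidable (a ≠ b ∧ ((a, b) ∈ A ∨ (b, a) ∈ A)))

/-
If reversing `i → j` created a directed cycle, that cycle would have to use the new arc `j → i`,
so the rest of it would be a directed path from `i` to `j` avoiding the arc `i → j`. In a
directed acyclic graph `j → i` is not an arc either, so this path avoids the edge `{i, j}` of the
underlying graph, contradicting that `{i, j}` is a bridge.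
-/

open Relation

section

variable {V : Type*}

theorem DAcyclic.mono {A B : Finset (V × V)} (hA : DAcyclic A) (hBA : B ⊆ A) : DAcyclic B :=
  fun a h => hA a (TransGen.mono (fun _ _ hxy => hBA hxy) _ _ h)

variable [DecidableEq V]

theorem reflTransGen_insert_arc {B : Finset (V × V)} {i j x y : V}
    (h : ReflTransGen (fun a b => (a, b) ∈ insert (j, i) B) x y) :
    ReflTransGen (fun a b => (a, b) ∈ B) x y ∨
      ReflTransGen (fun a b => (a, b) ∈ B) x j ∧
        ReflTransGen (fun a b => (a, b) ∈ B) i y := by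
  induction h with
  | refl => exact .inl .refl
  | tail _ hbc ih =>
    rcases Finset.mem_insert.mp hbc with hji | hbc
    · obtain ⟨rfl, rfl⟩ := Prod.mk.inj hji
      exact .inr ⟨ih.elim id And.left, .refl⟩
    · exact ih.imp (·.tail hbc) fun ⟨hxj, hiy⟩ => ⟨hxj, hiy.tail hbc⟩

theorem DAcyclic.insert_of_not_reflTransGen {B : Finset (V × V)} (hB : DAcyclic B) {i j : V}
    (hij : ¬ ReflTransGen (fun a b => (a, b) ∈ B) i j) : DAcyclic (insert (j, i) B) := by
  intro a hcyc
  obtain ⟨b, hab, hba⟩ := TransGen.head'_iff.mp hcyc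
  rcases Finset.mem_insert.mp hab with hji | hab
  · obtain ⟨rfl, rfl⟩ := Prod.mk.inj hji
    exact hij ((reflTransGen_insert_arc hba).elim id And.left)
  · rcases reflTransGen_insert_arc hba with hba | ⟨hbj, hia⟩
    · exact hB a (.head' hab hba)
    · exact hij ((hia.tail hab).trans hbj)

theorem DAcyclic.toGraph_adj {A : Finset (V × V)} (hA : DAcyclic A) {x y : V}
    (hxy : (x, y) ∈ A) : (toGraph A).Adj x y :=
  ⟨fun h => hA x (by subst h; exact .single hxy), .inl hxy⟩

theorem DAcyclic.reachable_deleteEdges_of_reflTransGen_erase {A : Finset (V × V)}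
    (hA : DAcyclic A) {i j : V} (hji : (j, i) ∉ A) {x y : V}
    (h : ReflTransGen (fun a b => (a, b) ∈ A.erase (i, j)) x y) :
    ((toGraph A).deleteEdges {s(i, j)}).Reachable x y := by
  induction h with
  | refl => rfl
  | @tail b c _ hbc ih =>
    obtain ⟨hne, hbcA⟩ := Finset.mem_erase.mp hbc
    refine ih.trans (SimpleGraph.Adj.reachable ?_)
    rw [SimpleGraph.deleteEdges_adj, Set.mem_singleton_iff, Sym2.eq_iff]
    refine ⟨hA.toGraph_adj hbcA, ?_⟩
    rintro (⟨rfl, rfl⟩ | ⟨rfl, rfl⟩)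
    exacts [hne rfl, hji hbcA]

end

/-- Reversing a bridge arc of an acyclic digraph keeps it acyclic. -/
theorem stmt_0 {V : Type*} [DecidableEq V] (A : Finset (V × V))
    (hA : DAcyclic A) (i j : V) (hij : (i, j) ∈ A)
    (hb : s(i, j) ∈ (toGraph A).edgeSet ∧ (toGraph A).IsBridge s(i, j)) :
    DAcyclic (insert (j, i) (A.erase (i, j))) := by
  have hji : (j, i) ∉ A := fun h => hA i (.head hij (.single h))
  refine (hA.mono (A.erase_subset _)).insert_of_not_reflTransGen fun hpath => ?_
  exact SimpleGraph.isBridge_iff.mp hb.2 (hA.reachable_deleteEdges_of_reflTransGen_erase hji hpath)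
end

section
/- Let T be a directed tree on N ≥ 3 vertices (an acyclic digraph whose underlying undirected graph is a tree) whose underlying tree has more than 2 leaves. Then there exist an arc e not in T and an arc f in T such that T ∪ {e} is acyclic and simply connected, (T ∪ {e}) \ {f} is acyclic with underlying undirected graph a tree, and the underlying tree of (T ∪ {e}) \ {f} has exactly one fewer leaf than that of T. -/
/-- The set of leaves (degree-1 vertices) of the underlying graph. -/
def leaves {V : Type*} [DecidableEq V] [Fintype V] (A : Finset (V × V)) : Finset V :=
  Finset.univ.filter fun v => (toGraph A).degree v = 1

/-!
Choose a vertex `b` of degree at least three (a tree all of whose degrees are at most two has at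
most two leaves), a leaf `u`, and a neighbour `x` of `b` off the path from `u` to `b`. Then `u` and
`b` stay connected without the edge `bx`, so the edge `ux` closes a cycle through `bx`, and
exchanging `bx` for `ux` yields a tree again. Only `u` changes its leaf status: it gets degree two,
`x` keeps its degree and `b` keeps degree at least two. Orienting `ux` against any directed path
between `u` and `x` creates no directed cycle.
-/

open Finset

namespace SimpleGraph

variable {V : Type*} {G : SimpleGraph V} {u x b : V}

lemma IsTree.exists_three_le_degree [Fintype V] [DecidableRel G.Adj] (hG : G.IsTree)
    (h : 2 < #{v | G.degree v = 1}) : ∃ b, 3 ≤ G.degree b := by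
  by_contra! hle
  have hsum : ∑ v, (G.degree v + if G.degree v = 1 then 1 else 0) ≤ ∑ _v : V, 2 :=
    sum_le_sum fun v _ => by have := hle v; split_ifs <;> omega
  rw [sum_add_distrib, sum_degrees_eq_twice_card_edges, sum_boole, Nat.cast_id, sum_const,
    card_univ, ← hG.card_edgeFinset, smul_eq_mul] at hsum
  omega

lemma IsAcyclic.exists_adj_reachable_deleteEdges (hG : G.IsAcyclic) (hreach : G.Reachable u b)
    [Fintype (G.neighborSet b)] (hb : 2 ≤ G.degree b) :
    ∃ x, G.Adj b x ∧ (G.deleteEdges {s(b, x)}).Reachable u b := by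
  classical
  obtain ⟨P, hP⟩ := hreach.exists_isPath
  obtain ⟨x, hx, hxpen⟩ := exists_mem_ne (s := G.neighborFinset b) (by simpa) P.penultimate
  rw [mem_neighborFinset] at hx
  have hxP : x ∉ P.support := fun h => hxpen (hG.eq_penultimate_of_adj_end hP hx h)
  exact ⟨x, hx, reachable_deleteEdges_iff_exists_walk.mpr
    ⟨P, fun h => hxP (P.snd_mem_support_of_mem_edges h)⟩⟩

lemma IsAcyclic.not_reachable_deleteEdges (hG : G.IsAcyclic) (hbx : G.Adj b x)
    (hu : (G.deleteEdges {s(b, x)}).Reachable u b) :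
    ¬(G.deleteEdges {s(b, x)}).Reachable u x :=
  fun h => isAcyclic_iff_forall_adj_isBridge.mp hG hbx (hu.symm.trans h)

lemma IsAcyclic.not_adj_of_reachable_deleteEdges (hG : G.IsAcyclic) (hbx : G.Adj b x)
    (hub : u ≠ b) (hu : (G.deleteEdges {s(b, x)}).Reachable u b) : ¬G.Adj u x := fun h =>
  hG.not_reachable_deleteEdges hbx hu (deleteEdges_adj.mpr ⟨h, by simp [hub, h.ne]⟩).reachable

lemma IsTree.isTree_sup_edge_deleteEdges (hG : G.IsTree) (hbx : G.Adj b x) (hub : u ≠ b)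
    (hu : (G.deleteEdges {s(b, x)}).Reachable u b) :
    ((G ⊔ edge u x).deleteEdges {s(b, x)}).IsTree := by
  have hnr := hG.isAcyclic.not_reachable_deleteEdges hbx hu
  have hux : u ≠ x := by rintro rfl; exact hnr .rfl
  refine ⟨(hG.connected.mono le_sup_left).connected_delete_edge_of_not_isBridge ?_, ?_⟩
  · have hadj : ((G ⊔ edge u x).deleteEdges {s(b, x)}).Adj u x := by
      simp [edge_adj, hux, hub]
    rw [isBridge_iff, not_not]
    exact (hu.mono (deleteEdges_mono le_sup_left)).symm.trans hadj.reachable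
  · rw [deleteEdges_sup]
    exact ((hG.isAcyclic.anti (deleteEdges_le _)).sup_edge_of_not_reachable hnr).anti
      (sup_le_sup_left (deleteEdges_le _) _)

lemma sup_edge_deleteEdges_adj (hux : u ≠ x) {v w : V} :
    ((G ⊔ edge u x).deleteEdges {s(b, x)}).Adj v w ↔
      (G.Adj v w ∨ v = u ∧ w = x ∨ v = x ∧ w = u) ∧ ¬(v = b ∧ w = x ∨ v = x ∧ w = b) := by
  simp only [deleteEdges_adj, sup_adj, edge_adj, Set.mem_singleton_iff, Sym2.eq_iff]
  grind

lemma degree_sup_edge_deleteEdges_eq_one_iff [Fintype V] [DecidableRel G.Adj]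
    {H : SimpleGraph V} [DecidableRel H.Adj] (hH : H = (G ⊔ edge u x).deleteEdges {s(b, x)})
    (hbx : G.Adj b x) (hnadj : ¬G.Adj u x) (hux : u ≠ x) (hu : G.degree u = 1)
    (hb : 3 ≤ G.degree b) (v : V) :
    H.degree v = 1 ↔ G.degree v = 1 ∧ v ≠ u := by
  classical
  have hub : u ≠ b := by rintro rfl; omega
  have hxb : x ≠ b := hbx.ne'
  have hadj (v w : V) : H.Adj v w ↔ _ := hH ▸ sup_edge_deleteEdges_adj hux
  rcases eq_or_ne v u with rfl | hvu
  · have hN : H.neighborFinset v = insert x (G.neighborFinset v) := by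
      ext w; simp only [mem_neighborFinset, mem_insert, hadj]; grind
    rw [← card_neighborFinset_eq_degree, hN, card_insert_of_notMem (by simpa using hnadj),
      card_neighborFinset_eq_degree, hu]
    simp
  rcases eq_or_ne v x with rfl | hvx
  · have hN : H.neighborFinset v = insert u ((G.neighborFinset v).erase b) := by
      ext w; simp only [mem_neighborFinset, mem_insert, mem_erase, hadj]; grind
    have hbN : b ∈ G.neighborFinset v := by simpa using hbx.symm
    rw [← card_neighborFinset_eq_degree, hN, card_insert_of_notMem (by simp [hnadj, G.adj_comm]),
      card_erase_of_mem hbN, ← card_neighborFinset_eq_degree]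
    have := card_pos.mpr ⟨b, hbN⟩
    grind
  rcases eq_or_ne v b with rfl | hvb
  · have hN : H.neighborFinset v = (G.neighborFinset v).erase x := by
      ext w; simp only [mem_neighborFinset, mem_erase, hadj]; grind
    rw [← card_neighborFinset_eq_degree, hN, card_erase_of_mem (by simpa using hbx),
      card_neighborFinset_eq_degree]
    omega
  have hN : H.neighborFinset v = G.neighborFinset v := by
    ext w; simp only [mem_neighborFinset, hadj]; grind
  rw [← card_neighborFinset_eq_degree, hN, card_neighborFinset_eq_degree]
  simp [hvu]

lemma card_degree_eq_one_sup_edge_deleteEdges [Fintype V] [DecidableRel G.Adj]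
    {H : SimpleGraph V} [DecidableRel H.Adj] (hH : H = (G ⊔ edge u x).deleteEdges {s(b, x)})
    (hbx : G.Adj b x) (hnadj : ¬G.Adj u x) (hux : u ≠ x) (hu : G.degree u = 1)
    (hb : 3 ≤ G.degree b) :
    #{v | H.degree v = 1} = #{v | G.degree v = 1} - 1 := by
  classical
  have hleaves : ({v | H.degree v = 1} : Finset V) = ({v | G.degree v = 1} : Finset V).erase u := by
    ext v
    simp [degree_sup_edge_deleteEdges_eq_one_iff hH hbx hnadj hux hu hb v, and_comm]
  rw [hleaves, card_erase_of_mem (by simpa using hu)]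

end SimpleGraph

open Relation SimpleGraph

section
variable {V : Type*} {A B : Finset (V × V)}

lemma DAcyclic.anti (hB : DAcyclic B) (h : A ⊆ B) : DAcyclic A :=
  fun a ha => hB a (TransGen.mono (fun _ _ hxy => h hxy) a a ha)

lemma DAcyclic.swap_notMem (hA : DAcyclic A) {p q : V} (h : (p, q) ∈ A) : (q, p) ∉ A :=
  fun h' => hA p (.head h (.single h'))

lemma reflTransGen_insert [DecidableEq V] {p q a d : V}
    (h : ReflTransGen (fun x y => (x, y) ∈ insert (p, q) A) a d) :
    ReflTransGen (fun x y => (x, y) ∈ A) a d ∨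
      ReflTransGen (fun x y => (x, y) ∈ A) a p ∧ ReflTransGen (fun x y => (x, y) ∈ A) q d := by
  induction h with
  | refl => exact .inl .refl
  | tail _ hcd ih =>
    rcases Finset.mem_insert.mp hcd with hcd | hcd
    · obtain ⟨rfl, rfl⟩ := Prod.ext_iff.mp hcd
      exact .inr ⟨ih.elim id And.left, .refl⟩
    · exact ih.imp (·.tail hcd) fun ⟨hap, hqc⟩ => ⟨hap, hqc.tail hcd⟩

lemma DAcyclic.insert_of_not_reflTransGen_s6 [DecidableEq V] (hA : DAcyclic A) {p q : V}
    (hqp : ¬ReflTransGen (fun x y => (x, y) ∈ A) q p) : DAcyclic (insert (p, q) A) := by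
  intro a ha
  obtain ⟨c, hac, hca⟩ := TransGen.head'_iff.mp ha
  rcases Finset.mem_insert.mp hac with hac | hac
  · obtain ⟨rfl, rfl⟩ := Prod.ext_iff.mp hac
    exact hqp ((reflTransGen_insert hca).elim id And.left)
  · rcases reflTransGen_insert hca with hca | ⟨hcp, hqa⟩
    · exact hA a (.head' hac hca)
    · exact hqp ((hqa.tail hac).trans hcp)

lemma DAcyclic.exists_insert_orientation [DecidableEq V] (hA : DAcyclic A) {p q : V} (hpq : p ≠ q) :
    ∃ p' q', s(p', q') = s(p, q) ∧ DAcyclic (insert (p', q') A) := by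
  by_cases hqp : ReflTransGen (fun x y => (x, y) ∈ A) q p
  · refine ⟨q, p, Sym2.eq_swap, DAcyclic.insert_of_not_reflTransGen_s6 hA fun hpq' => ?_⟩
    obtain hpq'' | hpq'' := reflTransGen_iff_eq_or_transGen.mp hpq'
    · exact hpq hpq''.symm
    · exact hA p (hpq''.trans_left hqp)
  · exact ⟨p, q, rfl, DAcyclic.insert_of_not_reflTransGen_s6 hA hqp⟩

end

section
variable {V : Type*} [DecidableEq V] {A : Finset (V × V)}

lemma toGraph_insert {p q u x : V} (h : s(p, q) = s(u, x)) :
    toGraph (insert (p, q) A) = toGraph A ⊔ edge u x := by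
  ext a c
  simp only [toGraph, sup_adj, edge_adj, Finset.mem_insert, Prod.mk.injEq]
  rcases Sym2.eq_iff.mp h with ⟨rfl, rfl⟩ | ⟨rfl, rfl⟩ <;> grind

lemma toGraph_erase {p q : V} (h : (q, p) ∉ A) :
    toGraph (A.erase (p, q)) = (toGraph A).deleteEdges {s(p, q)} := by
  ext a c
  simp only [toGraph, deleteEdges_adj, Finset.mem_erase, Set.mem_singleton_iff, Sym2.eq_iff]
  grind

lemma exists_mem_of_toGraph_adj {a c : V} (h : (toGraph A).Adj a c) :
    ∃ a' c', (a', c') ∈ A ∧ s(a', c') = s(a, c) := by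
  rcases h.2 with h | h
  exacts [⟨a, c, h, rfl⟩, ⟨c, a, h, Sym2.eq_swap⟩]

lemma DAcyclic.exists_arc_exchange (hA : DAcyclic A) {u x b : V} (hux : u ≠ x)
    (hnadj : ¬(toGraph A).Adj u x) (hbx : (toGraph A).Adj b x) (hub : u ≠ b) :
    ∃ e ∉ A, ∃ f ∈ A, DAcyclic (insert e A) ∧ toGraph (insert e A) = toGraph A ⊔ edge u x ∧
      toGraph ((insert e A).erase f) = (toGraph A ⊔ edge u x).deleteEdges {s(b, x)} := by
  obtain ⟨p, q, hpq, hacy⟩ := DAcyclic.exists_insert_orientation hA hux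
  obtain ⟨b', x', hf, hbx'⟩ := exists_mem_of_toGraph_adj hbx
  have heA : (p, q) ∉ A := fun h => by
    rcases Sym2.eq_iff.mp hpq with ⟨rfl, rfl⟩ | ⟨rfl, rfl⟩
    exacts [hnadj ⟨hux, .inl h⟩, hnadj ⟨hux, .inr h⟩]
  have hfe : (x', b') ∉ insert (p, q) A := by
    refine Finset.mem_insert.not.mpr (not_or.mpr ⟨fun h => ?_, DAcyclic.swap_notMem hA hf⟩)
    obtain ⟨rfl, rfl⟩ := Prod.ext_iff.mp h
    rw [Sym2.eq_swap, hbx', Sym2.eq_iff] at hpq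
    rcases hpq with ⟨h, -⟩ | ⟨-, h⟩
    exacts [hub h.symm, hux h.symm]
  refine ⟨(p, q), heA, (b', x'), hf, hacy, toGraph_insert hpq, ?_⟩
  rw [toGraph_erase hfe, toGraph_insert hpq, hbx']

end

theorem stmt_6_general {V : Type*} [DecidableEq V] [Fintype V] (T : Finset (V × V)) (hacy : DAcyclic T)
    (htree : (toGraph T).IsTree) (hleaves : 2 < (leaves T).card) :
    ∃ e ∉ T, ∃ f ∈ T,
      DAcyclic (insert e T) ∧ (toGraph (insert e T)).Connected ∧
      DAcyclic ((insert e T).erase f) ∧ (toGraph ((insert e T).erase f)).IsTree ∧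
      (leaves ((insert e T).erase f)).card = (leaves T).card - 1 := by
  obtain ⟨b, hb⟩ := htree.exists_three_le_degree hleaves
  obtain ⟨u, hu⟩ := card_pos.mp (by omega : 0 < (leaves T).card)
  replace hu : (toGraph T).degree u = 1 := (mem_filter.mp hu).2
  have hub : u ≠ b := by rintro rfl; omega
  obtain ⟨x, hbx, hreach⟩ :=
    htree.isAcyclic.exists_adj_reachable_deleteEdges (htree.connected u b) (by omega)
  have hux : u ≠ x := by
    rintro rfl; exact htree.isAcyclic.not_reachable_deleteEdges hbx hreach .rfl
  have hnadj := htree.isAcyclic.not_adj_of_reachable_deleteEdges hbx hub hreach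
  obtain ⟨e, heT, f, hf, hacy_e, hins, hexch⟩ := DAcyclic.exists_arc_exchange hacy hux hnadj hbx hub
  exact ⟨e, heT, f, hf, hacy_e, hins ▸ htree.connected.mono le_sup_left,
    DAcyclic.anti hacy_e (erase_subset _ _),
    hexch ▸ htree.isTree_sup_edge_deleteEdges hbx hub hreach,
    card_degree_eq_one_sup_edge_deleteEdges hexch hbx hnadj hux hu hb⟩

/-- In a directed tree with more than two leaves one can add an arc `e` and delete an
arc `f` so as to obtain a directed tree with one leaf fewer, keeping acyclicity and
connectedness throughout. -/
theorem stmt_6 {V : Type*} [DecidableEq V] [Fintype V] (N : ℕ) (hN : 3 ≤ N)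
    (hcard : Fintype.card V = N) (T : Finset (V × V)) (hacy : DAcyclic T)
    (htree : (toGraph T).IsTree) (hleaves : 2 < (leaves T).card) :
    ∃ e ∉ T, ∃ f ∈ T,
      DAcyclic (insert e T) ∧ (toGraph (insert e T)).Connected ∧
      DAcyclic ((insert e T).erase f) ∧ (toGraph ((insert e T).erase f)).IsTree ∧
      (leaves ((insert e T).erase f)).card = (leaves T).card - 1 :=
  stmt_6_general T hacy htree hleaves
end
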